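/- For every n ≥ 4, the 2-abelian complexity of the Thue–Morse word is given by: P(2n+1) = 2·(2·|PAIRS(2n)| − E(PAIRS(2n))) and P(2n) = 2·(|PAIRS(2n)| + |PAIRS(2n−2)| − E(PAIRS(2n) ∩ PAIRS(2n−2))), where |S| denotes the cardinality of the finite set S and E(S) denotes the number of even elements of S. -/

import Mathlib

open Fin.NatCast in
/-- The Thue–Morse sequence: sum of binary digits of `n`, mod 2. -/
def tm (n : ℕ) : Fin 2 := ((Nat.digits 2 n).sum : Fin 2)

/-- The factor of the Thue–Morse word of length `n` starting at position `i`. -/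
def tmWord (i n : ℕ) : List (Fin 2) := (List.range n).map (fun j => tm (i + j))

/-- A binary word is a factor of the Thue–Morse word. -/
def IsFactor (w : List (Fin 2)) : Prop := ∃ i : ℕ, w = tmWord i w.length

/-- Number of occurrences of the word `x` as a factor of `u`. -/
def occCount (u x : List (Fin 2)) : ℕ :=
  ((List.range u.length).filter (fun i => (u.drop i).take x.length = x)).length

/-- Two binary words (of equal length) are 2-abelian equivalent: same first letter,
same last letter, and the same number of occurrences of every word of length 2. -/
def TwoAbelianEquiv (u v : List (Fin 2)) : Prop :=
  u.length = v.length ∧ u.take 1 = v.take 1 ∧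
  u.drop (u.length - 1) = v.drop (v.length - 1) ∧
  ∀ x : List (Fin 2), x.length = 2 → occCount u x = occCount v x

/-- `P n` is the 2-abelian complexity of the Thue–Morse word: the number of
2-abelian equivalence classes of factors of length `n`. -/
noncomputable def P (n : ℕ) : ℕ :=
  Nat.card (Quot (fun u v : {w : List (Fin 2) // w.length = n ∧ IsFactor w} =>
    TwoAbelianEquiv u.1 v.1))

/-- `pword w` counts the pairs in `w`: the total number of occurrences of `00` and `11`. -/
def pword (w : List (Fin 2)) : ℕ := occCount w [0, 0] + occCount w [1, 1]

/-- The set of possible pair counts of Thue–Morse factors of length `n`. -/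
def pairs (n : ℕ) : Set ℕ :=
  { m | ∃ w : List (Fin 2), w.length = n ∧ IsFactor w ∧ pword w = m }

/-- The set of possible pair counts of Thue–Morse factors of length `n`
occurring at some odd position (pure odd factors). -/
def PAIRS (n : ℕ) : Set ℕ := { m | ∃ i : ℕ, i % 2 = 1 ∧ pword (tmWord i n) = m }

/-!
For binary words of equal length, 2-abelian equivalence is determined by the first letter, the
last letter, the number of `1`s and the pair count, since these fix the numbers of occurrences of
`00`, `01`, `10` and `11`. Let `μ` be the Thue–Morse morphism. A factor of `t` at `2j` is
`μ(u)`, possibly followed by one letter, and a factor at `2j + 1` is one letter followed by such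
a word, where `u` is a factor of `t` at `j`. Since `μ(u)` has one pair for each change between
consecutive letters of `u`, all four invariants are functions of `t(j)` and the number `q` of
changes in `u`; at length `2n + 1` both families have `q ∈ PAIRS(2n)`, at length `2n` the
factors at even positions have `q ∈ PAIRS(2n - 2)` and those at odd positions `q ∈ PAIRS(2n)`.
Adding a large power of two to `j` complements `t(j)` but keeps `q`, so every first letter occurs
with every `q`. Hence the classes of factors at even positions, and those at odd positions, are
each parametrised injectively by (first letter, `q`), and a class of one kind equals one of the other exactly when `q` is even;
inclusion–exclusion gives both formulas.
-/

open Finset Fin.NatCast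

lemma Nat.card_quot_eq_card_range {α β : Type*} (r : α → α → Prop) (f : α → β)
    (h : ∀ a b, r a b ↔ f a = f b) : Nat.card (Quot r) = Nat.card (Set.range f) := by
  obtain rfl : r = (Setoid.ker f).r := by
    funext a b
    exact propext (h a b)
  exact Nat.card_congr (Setoid.quotientKerEquivRange f)

lemma Set.range_eq_range_two_mul_union_range_two_mul_add_one {α : Type*} (f : ℕ → α) :
    Set.range f = Set.range (fun j => f (2 * j)) ∪ Set.range (fun j => f (2 * j + 1)) := by
  ext y
  simp only [Set.mem_union, Set.mem_range]
  constructor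
  · rintro ⟨i, rfl⟩
    obtain ⟨j, rfl | rfl⟩ := Nat.even_or_odd' i
    exacts [Or.inl ⟨j, rfl⟩, Or.inr ⟨j, rfl⟩]
  · rintro (⟨j, rfl⟩ | ⟨j, rfl⟩) <;> exact ⟨_, rfl⟩

lemma Set.ncard_image_prod_union_image_prod {ι α β : Type*} [Finite ι] {A B E : Set α}
    (hA : A.Finite) (hB : B.Finite) {f g : ι × α → β} (hf : f.Injective) (hg : g.Injective)
    (hfg : ∀ x y, f x = g y ↔ x = y ∧ x.2 ∈ E) :
    (f '' (univ ×ˢ A) ∪ g '' (univ ×ˢ B)).ncard =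
      Nat.card ι * (A.ncard + B.ncard - (A ∩ B ∩ E).ncard) := by
  have hinter : f '' (univ ×ˢ A) ∩ g '' (univ ×ˢ B) = f '' (univ ×ˢ (A ∩ B ∩ E)) := by
    ext z
    constructor
    · rintro ⟨⟨x, hx, rfl⟩, y, hy, hyx⟩
      obtain ⟨rfl, hxE⟩ := (hfg x y).1 hyx.symm
      exact ⟨x, ⟨trivial, ⟨hx.2, hy.2⟩, hxE⟩, rfl⟩
    · rintro ⟨x, ⟨-, ⟨hxA, hxB⟩, hxE⟩, rfl⟩
      exact ⟨⟨x, ⟨trivial, hxA⟩, rfl⟩, x, ⟨trivial, hxB⟩,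
        ((hfg x x).2 ⟨rfl, hxE⟩).symm⟩
  have hunion := Set.ncard_union_add_ncard_inter _ _
    ((Set.finite_univ.prod hA).image f) ((Set.finite_univ.prod hB).image g)
  rw [hinter] at hunion
  simp only [Set.ncard_image_of_injective _ hf, Set.ncard_image_of_injective _ hg,
    Set.ncard_prod, Set.ncard_univ] at hunion
  have hle : (A ∩ B ∩ E).ncard ≤ A.ncard :=
    Set.ncard_le_ncard (Set.inter_subset_left.trans Set.inter_subset_left) hA
  have := Nat.mul_le_mul_left (Nat.card ι) hle
  rw [Nat.mul_sub, mul_add]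
  omega

lemma Fin.val_add_one_add_val_two (a : Fin 2) : (a + 1).val + a.val = 1 := by
  fin_cases a <;> rfl

lemma occCount_cons (a : Fin 2) (t x : List (Fin 2)) :
    occCount (a :: t) x = (if (a :: t).take x.length = x then 1 else 0) + occCount t x := by
  unfold occCount
  rw [List.length_cons, List.range_succ_eq_map, List.filter_cons, List.filter_map]
  simp only [List.drop_zero, Function.comp_def, Nat.succ_eq_add_one, List.drop_succ_cons]
  by_cases h : (a :: t).take x.length = x <;> simp [h, Nat.add_comm]

lemma occCount_singleton_pair (a c d : Fin 2) : occCount [a] [c, d] = 0 := by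
  simp [occCount]

lemma occCount_cons_cons_pair (a b c d : Fin 2) (t : List (Fin 2)) :
    occCount (a :: b :: t) [c, d] =
      (if a = c ∧ b = d then 1 else 0) + occCount (b :: t) [c, d] := by
  simp [occCount_cons]

lemma pword_singleton (a : Fin 2) : pword [a] = 0 := by
  simp [pword, occCount_singleton_pair]

lemma pword_cons_cons (a b : Fin 2) (t : List (Fin 2)) :
    pword (a :: b :: t) = (if a = b then 1 else 0) + pword (b :: t) := by
  simp only [pword, occCount_cons_cons_pair]
  fin_cases a <;> fin_cases b <;> simp <;> omega

lemma sum_occCount_pairs (u : List (Fin 2)) :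
    occCount u [0, 0] + occCount u [0, 1] + occCount u [1, 0] + occCount u [1, 1] =
      u.length - 1 := by
  induction u with
  | nil => rfl
  | cons a t ih =>
    cases t with
    | nil => simp [occCount_singleton_pair]
    | cons b s =>
      simp only [occCount_cons_cons_pair, List.length_cons] at ih ⊢
      fin_cases a <;> fin_cases b <;> simp at ih ⊢ <;> omega

lemma occCount_pairs_starting_with_one (u : List (Fin 2)) :
    occCount u [1, 0] + occCount u [1, 1] + (u.drop (u.length - 1)).count 1 = u.count 1 := by
  induction u with
  | nil => rfl
  | cons a t ih =>
    cases t with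
    | nil => simp [occCount_singleton_pair]
    | cons b s =>
      simp only [occCount_cons_cons_pair, List.length_cons, Nat.add_sub_cancel,
        List.drop_succ_cons, List.count_cons] at ih ⊢
      fin_cases a <;> fin_cases b <;> simp at ih ⊢ <;> omega

lemma occCount_pairs_ending_with_one (u : List (Fin 2)) :
    occCount u [0, 1] + occCount u [1, 1] + (u.take 1).count 1 = u.count 1 := by
  induction u with
  | nil => rfl
  | cons a t ih =>
    cases t with
    | nil => simp [occCount_singleton_pair]
    | cons b s =>
      simp only [occCount_cons_cons_pair, List.take_succ_cons, List.take_zero,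
        List.count_cons] at ih ⊢
      fin_cases a <;> fin_cases b <;> simp at ih ⊢ <;> omega

def twoAbelianKey (w : List (Fin 2)) : List (Fin 2) × List (Fin 2) × ℕ × ℕ :=
  (w.take 1, w.drop (w.length - 1), w.count 1, pword w)

lemma twoAbelianEquiv_iff (u v : List (Fin 2)) :
    TwoAbelianEquiv u v ↔ u.length = v.length ∧ twoAbelianKey u = twoAbelianKey v := by
  have su := sum_occCount_pairs u; have sv := sum_occCount_pairs v
  have lu := occCount_pairs_starting_with_one u; have lv := occCount_pairs_starting_with_one v
  have fu := occCount_pairs_ending_with_one u; have fv := occCount_pairs_ending_with_one v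
  simp only [TwoAbelianEquiv, twoAbelianKey, pword, Prod.mk.injEq]
  constructor
  · rintro ⟨hlen, hfirst, hlast, hocc⟩
    have := hocc [0, 0] rfl; have := hocc [1, 0] rfl; have := hocc [1, 1] rfl
    rw [hlast] at lu
    exact ⟨hlen, hfirst, hlast, by omega, by omega⟩
  · rintro ⟨hlen, hfirst, hlast, hcount, hpairs⟩
    refine ⟨hlen, hfirst, hlast, fun x hx => ?_⟩
    obtain ⟨c, d, rfl⟩ := List.length_eq_two.1 hx
    rw [hfirst] at fu; rw [hlast] at lu
    fin_cases c <;> fin_cases d <;> simp <;> omega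

lemma length_tmWord (i L : ℕ) : (tmWord i L).length = L := by
  simp [tmWord]

lemma P_eq_ncard_range (N : ℕ) :
    P N = (Set.range fun i => twoAbelianKey (tmWord i N)).ncard := by
  rw [P, Nat.card_quot_eq_card_range _ (fun w => twoAbelianKey w.1)
    (fun u v => by rw [twoAbelianEquiv_iff, u.2.1, v.2.1]; simp), ← Nat.card_coe_set_eq]
  congr 2
  ext k
  constructor
  · rintro ⟨⟨w, hlen, i, hw⟩, rfl⟩
    exact ⟨i, by dsimp only; rw [← hlen, ← hw]⟩
  · rintro ⟨i, rfl⟩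
    exact ⟨⟨tmWord i N, length_tmWord i N, i, by rw [length_tmWord]⟩, rfl⟩

lemma tm_two_mul (m : ℕ) : tm (2 * m) = tm m := by
  rcases Nat.eq_zero_or_pos m with rfl | hm
  · rfl
  · rw [tm, Nat.digits_def' (by norm_num) (by omega), Nat.mul_div_cancel_left m (by norm_num),
      Nat.mul_mod_right, List.sum_cons, zero_add, tm]

lemma tm_two_mul_add_one (m : ℕ) : tm (2 * m + 1) = tm m + 1 := by
  rw [tm, Nat.digits_def' (by norm_num) (by omega), List.sum_cons, Nat.cast_add, tm,
    show (2 * m + 1) % 2 = 1 by omega, show (2 * m + 1) / 2 = m by omega, Nat.cast_one, add_comm]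

lemma tm_add_two_pow {k i : ℕ} (h : i < 2 ^ k) : tm (i + 2 ^ k) = tm i + 1 := by
  induction k generalizing i with
  | zero =>
    obtain rfl : i = 0 := by simpa using h
    rfl
  | succ k ih =>
    obtain ⟨m, rfl | rfl⟩ := Nat.even_or_odd' i
    · rw [show 2 * m + 2 ^ (k + 1) = 2 * (m + 2 ^ k) by ring, tm_two_mul, tm_two_mul,
        ih (by rw [pow_succ] at h; omega)]
    · rw [show 2 * m + 1 + 2 ^ (k + 1) = 2 * (m + 2 ^ k) + 1 by ring, tm_two_mul_add_one,
        tm_two_mul_add_one, ih (by rw [pow_succ] at h; omega)]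

def tmPairs (i L : ℕ) : ℕ := ∑ k ∈ range L, if tm (i + k) = tm (i + k + 1) then 1 else 0

def tmChanges (j m : ℕ) : ℕ := ∑ k ∈ range m, if tm (j + k) = tm (j + k + 1) then 0 else 1

lemma tmPairs_succ (i L : ℕ) :
    tmPairs i (L + 1) = tmPairs i L + if tm (i + L) = tm (i + L + 1) then 1 else 0 :=
  sum_range_succ _ _

lemma tmChanges_succ (j m : ℕ) :
    tmChanges j (m + 1) = tmChanges j m + if tm (j + m) = tm (j + m + 1) then 0 else 1 :=
  sum_range_succ _ _

lemma tmChanges_le (j m : ℕ) : tmChanges j m ≤ m := by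
  calc tmChanges j m ≤ ∑ _k ∈ range m, 1 := sum_le_sum fun k _ => by split <;> omega
    _ = m := by simp

lemma tm_add_eq_add_tmChanges (j m : ℕ) : tm (j + m) = tm j + (tmChanges j m : Fin 2) := by
  induction m with
  | zero => simp [tmChanges]
  | succ m ih =>
    rw [tmChanges_succ, Nat.cast_add, ← add_assoc (tm j), ← ih]
    generalize tm (j + m) = a, tm (j + m + 1) = b
    fin_cases a <;> fin_cases b <;> rfl

lemma tmChanges_add_two_pow {j m k : ℕ} (h : j + m < 2 ^ k) :
    tmChanges (j + 2 ^ k) m = tmChanges j m := by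
  refine sum_congr rfl fun x hx => ?_
  have hx : x < m := mem_range.1 hx
  have h₁ : tm (j + 2 ^ k + x) = tm (j + x) + 1 := by
    rw [← tm_add_two_pow (k := k) (by omega)]; ring_nf
  have h₂ : tm (j + 2 ^ k + x + 1) = tm (j + x + 1) + 1 := by
    rw [← tm_add_two_pow (k := k) (by omega)]; ring_nf
  simp only [h₁, h₂, add_left_inj]

/-- Adding a large power of two to `j` complements a prefix of `t` starting at `j`. -/
lemma exists_tm_eq_tmChanges_eq (j m : ℕ) (s : Fin 2) :
    ∃ j', tm j' = s ∧ tmChanges j' m = tmChanges j m := by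
  by_cases hs : tm j = s
  · exact ⟨j, hs, rfl⟩
  have hlt : j + m < 2 ^ (j + m) := Nat.lt_two_pow_self
  refine ⟨j + 2 ^ (j + m), ?_, tmChanges_add_two_pow hlt⟩
  rw [tm_add_two_pow (by omega)]
  revert hs
  generalize tm j = a
  fin_cases a <;> fin_cases s <;> decide

lemma tmPairs_two_mul_two_mul (j m : ℕ) : tmPairs (2 * j) (2 * m) = tmChanges j m := by
  induction m with
  | zero => rfl
  | succ m ih =>
    rw [show 2 * (m + 1) = 2 * m + 1 + 1 by ring, tmPairs_succ, tmPairs_succ, ih, tmChanges_succ,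
      show 2 * j + 2 * m = 2 * (j + m) by ring, show 2 * j + (2 * m + 1) = 2 * (j + m) + 1 by ring,
      show 2 * (j + m) + 1 + 1 = 2 * (j + m + 1) by ring, tm_two_mul, tm_two_mul,
      tm_two_mul_add_one]
    generalize tm (j + m) = a, tm (j + m + 1) = b
    fin_cases a <;> fin_cases b <;> rfl

lemma tmPairs_two_mul_two_mul_add_one (j m : ℕ) :
    tmPairs (2 * j) (2 * m + 1) = tmChanges j m := by
  rw [tmPairs_succ, tmPairs_two_mul_two_mul, show 2 * j + 2 * m = 2 * (j + m) by ring,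
    tm_two_mul, tm_two_mul_add_one]
  generalize tm (j + m) = a
  fin_cases a <;> rfl

lemma tmPairs_two_mul_add_one (j L : ℕ) : tmPairs (2 * j + 1) L = tmPairs (2 * j) (L + 1) := by
  rw [tmPairs, tmPairs, sum_range_succ', add_zero, tm_two_mul, tm_two_mul_add_one]
  simp only [Nat.add_assoc, Nat.add_comm 1]
  generalize tm j = a
  fin_cases a <;> rfl

lemma tmWord_add (i a b : ℕ) : tmWord i (a + b) = tmWord i a ++ tmWord (i + a) b := by
  simp [tmWord, List.range_add, Nat.add_assoc]

lemma tmWord_succ (i L : ℕ) : tmWord i (L + 1) = tm i :: tmWord (i + 1) L := by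
  rw [Nat.add_comm, tmWord_add]
  simp [tmWord]

lemma count_one_singleton (a : Fin 2) : [a].count 1 = a.val := by
  fin_cases a <;> rfl

lemma count_one_tmWord_two_mul_two_mul (j m : ℕ) : (tmWord (2 * j) (2 * m)).count 1 = m := by
  induction m with
  | zero => rfl
  | succ m ih =>
    rw [show 2 * (m + 1) = 2 * m + 2 by ring, tmWord_add, List.count_append, ih,
      show 2 * j + 2 * m = 2 * (j + m) by ring, tmWord_succ, tmWord_succ]
    simp only [tmWord, List.range_zero, List.map_nil, tm_two_mul, tm_two_mul_add_one]
    generalize tm (j + m) = a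
    fin_cases a <;> rfl

lemma count_one_tmWord_two_mul_two_mul_add_one (j m : ℕ) :
    (tmWord (2 * j) (2 * m + 1)).count 1 = m + (tm (j + m)).val := by
  rw [tmWord_add, List.count_append, count_one_tmWord_two_mul_two_mul,
    show 2 * j + 2 * m = 2 * (j + m) by ring, tmWord_succ]
  simp [tmWord, tm_two_mul, count_one_singleton]

lemma count_one_tmWord_two_mul_add_one (j L : ℕ) :
    (tmWord (2 * j + 1) L).count 1 + (tm j).val = (tmWord (2 * j) (L + 1)).count 1 := by
  rw [tmWord_succ (2 * j), List.count_cons, tm_two_mul]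
  generalize tm j = a
  fin_cases a <;> simp

lemma pword_tmWord (i L : ℕ) : pword (tmWord i (L + 1)) = tmPairs i L := by
  induction L generalizing i with
  | zero => simp [tmWord, pword_singleton, tmPairs]
  | succ L ih =>
    rw [tmWord_succ, tmWord_succ, pword_cons_cons, ← tmWord_succ, ih, tmPairs, tmPairs,
      sum_range_succ', Nat.add_zero, Nat.add_comm]
    simp only [Nat.add_assoc, Nat.add_comm 1, Nat.add_zero]

lemma twoAbelianKey_tmWord (i L : ℕ) : twoAbelianKey (tmWord i (L + 1)) =
    ([tm i], [tm (i + L)], (tmWord i (L + 1)).count 1, tmPairs i L) := by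
  rw [twoAbelianKey, pword_tmWord, length_tmWord, Nat.add_sub_cancel, tmWord_add i L 1,
    List.drop_left' (length_tmWord i L), ← tmWord_add, tmWord_succ]
  simp [tmWord]

-- In each key below, `x = (first letter, pair count)` of the factor.

def keyOddLenEvenPos (n : ℕ) (x : Fin 2 × ℕ) : List (Fin 2) × List (Fin 2) × ℕ × ℕ :=
  ([x.1], [x.1 + x.2], n + (x.1 + x.2).val, x.2)

def keyOddLenOddPos (n : ℕ) (x : Fin 2 × ℕ) : List (Fin 2) × List (Fin 2) × ℕ × ℕ :=
  ([x.1], [x.1 + x.2], n + x.1.val, x.2)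

def keyEvenLenEvenPos (m : ℕ) (x : Fin 2 × ℕ) : List (Fin 2) × List (Fin 2) × ℕ × ℕ :=
  ([x.1], [x.1 + x.2 + 1], m + 1, x.2)

def keyEvenLenOddPos (m : ℕ) (x : Fin 2 × ℕ) : List (Fin 2) × List (Fin 2) × ℕ × ℕ :=
  ([x.1], [x.1 + x.2 + 1], m + x.1.val + (x.1 + x.2 + 1).val, x.2)

lemma twoAbelianKey_tmWord_two_mul_two_mul_add_one (j n : ℕ) :
    twoAbelianKey (tmWord (2 * j) (2 * n + 1)) = keyOddLenEvenPos n (tm j, tmChanges j n) := by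
  rw [twoAbelianKey_tmWord, count_one_tmWord_two_mul_two_mul_add_one, tmPairs_two_mul_two_mul,
    tm_two_mul, show 2 * j + 2 * n = 2 * (j + n) by ring, tm_two_mul, tm_add_eq_add_tmChanges]
  rfl

lemma twoAbelianKey_tmWord_two_mul_add_one_two_mul_add_one (j n : ℕ) :
    twoAbelianKey (tmWord (2 * j + 1) (2 * n + 1)) =
      keyOddLenOddPos n (tm j + 1, tmChanges j n) := by
  have hcount := count_one_tmWord_two_mul_add_one j (2 * n + 1)
  rw [show 2 * n + 1 + 1 = 2 * (n + 1) by ring, count_one_tmWord_two_mul_two_mul] at hcount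
  have := Fin.val_add_one_add_val_two (tm j)
  rw [twoAbelianKey_tmWord, tmPairs_two_mul_add_one, tmPairs_two_mul_two_mul_add_one,
    tm_two_mul_add_one, show 2 * j + 1 + 2 * n = 2 * (j + n) + 1 by ring, tm_two_mul_add_one,
    tm_add_eq_add_tmChanges, keyOddLenOddPos, add_right_comm]
  simp only [Prod.mk.injEq, true_and, and_true]
  omega

lemma twoAbelianKey_tmWord_two_mul_two_mul_add_two (j m : ℕ) :
    twoAbelianKey (tmWord (2 * j) (2 * m + 2)) = keyEvenLenEvenPos m (tm j, tmChanges j m) := by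
  rw [twoAbelianKey_tmWord, show 2 * m + 1 + 1 = 2 * (m + 1) by ring,
    count_one_tmWord_two_mul_two_mul, tmPairs_two_mul_two_mul_add_one, tm_two_mul,
    show 2 * j + (2 * m + 1) = 2 * (j + m) + 1 by ring, tm_two_mul_add_one, tm_add_eq_add_tmChanges]
  rfl

lemma twoAbelianKey_tmWord_two_mul_add_one_two_mul_add_two (j m : ℕ) :
    twoAbelianKey (tmWord (2 * j + 1) (2 * m + 2)) =
      keyEvenLenOddPos m (tm j + 1, tmChanges j (m + 1)) := by
  have hlast : tm j + 1 + (tmChanges j (m + 1) : Fin 2) + 1 = tm (j + (m + 1)) := by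
    rw [tm_add_eq_add_tmChanges]
    generalize tm j = a, (tmChanges j (m + 1) : Fin 2) = c
    fin_cases a <;> fin_cases c <;> rfl
  have hpairs : tmPairs (2 * j + 1) (2 * m + 1) = tmChanges j (m + 1) := by
    rw [tmPairs_two_mul_add_one]
    exact tmPairs_two_mul_two_mul j (m + 1)
  have hcount := count_one_tmWord_two_mul_add_one j (2 * m + 1 + 1)
  rw [show 2 * m + 1 + 1 + 1 = 2 * (m + 1) + 1 by ring,
    count_one_tmWord_two_mul_two_mul_add_one] at hcount
  have := Fin.val_add_one_add_val_two (tm j)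
  rw [twoAbelianKey_tmWord, hpairs, tm_two_mul_add_one,
    show 2 * j + 1 + (2 * m + 1) = 2 * (j + (m + 1)) by ring, tm_two_mul, keyEvenLenOddPos, hlast]
  simp only [Prod.mk.injEq, true_and, and_true]
  omega

lemma keyOddLenEvenPos_injective (n : ℕ) : (keyOddLenEvenPos n).Injective :=
  fun _ _ h => Prod.ext (List.singleton_inj.1 (congrArg Prod.fst h)) (congrArg (·.2.2.2) h)

lemma keyOddLenOddPos_injective (n : ℕ) : (keyOddLenOddPos n).Injective :=
  fun _ _ h => Prod.ext (List.singleton_inj.1 (congrArg Prod.fst h)) (congrArg (·.2.2.2) h)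

lemma keyEvenLenEvenPos_injective (m : ℕ) : (keyEvenLenEvenPos m).Injective :=
  fun _ _ h => Prod.ext (List.singleton_inj.1 (congrArg Prod.fst h)) (congrArg (·.2.2.2) h)

lemma keyEvenLenOddPos_injective (m : ℕ) : (keyEvenLenOddPos m).Injective :=
  fun _ _ h => Prod.ext (List.singleton_inj.1 (congrArg Prod.fst h)) (congrArg (·.2.2.2) h)

lemma keyOddLenEvenPos_eq_keyOddLenOddPos_iff (n : ℕ) (x y : Fin 2 × ℕ) :
    keyOddLenEvenPos n x = keyOddLenOddPos n y ↔ x = y ∧ Even x.2 := by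
  obtain ⟨s, q⟩ := x
  obtain ⟨s', q'⟩ := y
  simp only [keyOddLenEvenPos, keyOddLenOddPos, Prod.mk.injEq, List.cons.injEq, and_true,
    even_iff_two_dvd, ← Fin.natCast_eq_zero (n := 2)]
  constructor
  · rintro ⟨rfl, -, h, rfl⟩
    refine ⟨⟨rfl, rfl⟩, ?_⟩
    generalize (q : Fin 2) = c at h
    fin_cases s <;> fin_cases c <;> simp_all
  · rintro ⟨⟨rfl, rfl⟩, h⟩
    simp [h]

lemma keyEvenLenOddPos_eq_keyEvenLenEvenPos_iff (m : ℕ) (x y : Fin 2 × ℕ) :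
    keyEvenLenOddPos m x = keyEvenLenEvenPos m y ↔ x = y ∧ Even x.2 := by
  obtain ⟨s, q⟩ := x
  obtain ⟨s', q'⟩ := y
  simp only [keyEvenLenOddPos, keyEvenLenEvenPos, Prod.mk.injEq, List.cons.injEq, and_true,
    even_iff_two_dvd, ← Fin.natCast_eq_zero (n := 2)]
  constructor
  · rintro ⟨rfl, -, h, rfl⟩
    refine ⟨⟨rfl, rfl⟩, ?_⟩
    generalize (q : Fin 2) = c at h
    fin_cases s <;> fin_cases c <;> simp_all
  · rintro ⟨⟨rfl, rfl⟩, h⟩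
    generalize (q : Fin 2) = c at h
    subst h
    fin_cases s <;> simp

lemma pword_tmWord_two_mul_add_one_two_mul (j m : ℕ) :
    pword (tmWord (2 * j + 1) (2 * m)) = tmChanges j m := by
  cases m with
  | zero => rfl
  | succ m =>
    rw [show 2 * (m + 1) = 2 * m + 1 + 1 by ring, pword_tmWord, tmPairs_two_mul_add_one]
    exact tmPairs_two_mul_two_mul j (m + 1)

lemma PAIRS_two_mul (m : ℕ) : PAIRS (2 * m) = Set.range (tmChanges · m) := by
  ext q
  constructor
  · rintro ⟨i, hi, rfl⟩
    obtain ⟨j, rfl⟩ : ∃ j, i = 2 * j + 1 := ⟨i / 2, by omega⟩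
    exact ⟨j, (pword_tmWord_two_mul_add_one_two_mul j m).symm⟩
  · rintro ⟨j, rfl⟩
    exact ⟨2 * j + 1, by omega, pword_tmWord_two_mul_add_one_two_mul j m⟩

lemma PAIRS_two_mul_finite (m : ℕ) : (PAIRS (2 * m)).Finite := by
  rw [PAIRS_two_mul]
  exact (Set.finite_Iic m).subset (Set.range_subset_iff.2 fun j => tmChanges_le j m)

lemma range_tm_add_tmChanges (c : Fin 2) (m : ℕ) :
    Set.range (fun j => (tm j + c, tmChanges j m)) = Set.univ ×ˢ PAIRS (2 * m) := by
  rw [PAIRS_two_mul]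
  ext ⟨s, q⟩
  simp only [Set.mem_range, Prod.mk.injEq, Set.mem_prod, Set.mem_univ, true_and]
  constructor
  · rintro ⟨j, -, rfl⟩
    exact ⟨j, rfl⟩
  · rintro ⟨j₀, rfl⟩
    obtain ⟨j, hj, hq⟩ := exists_tm_eq_tmChanges_eq j₀ m (s - c)
    exact ⟨j, by rw [hj, sub_add_cancel], hq⟩

lemma range_twoAbelianKey_tmWord_two_mul_add_one (n : ℕ) :
    Set.range (fun i => twoAbelianKey (tmWord i (2 * n + 1))) =
      keyOddLenEvenPos n '' (Set.univ ×ˢ PAIRS (2 * n)) ∪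
        keyOddLenOddPos n '' (Set.univ ×ˢ PAIRS (2 * n)) := by
  have heven : Set.range (fun j => (tm j, tmChanges j n)) = Set.univ ×ˢ PAIRS (2 * n) := by
    simpa using range_tm_add_tmChanges 0 n
  rw [Set.range_eq_range_two_mul_union_range_two_mul_add_one]
  simp only [twoAbelianKey_tmWord_two_mul_two_mul_add_one,
    twoAbelianKey_tmWord_two_mul_add_one_two_mul_add_one]
  rw [Set.range_comp', Set.range_comp', heven, range_tm_add_tmChanges]

lemma range_twoAbelianKey_tmWord_two_mul_add_two (m : ℕ) :
    Set.range (fun i => twoAbelianKey (tmWord i (2 * m + 2))) =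
      keyEvenLenEvenPos m '' (Set.univ ×ˢ PAIRS (2 * m)) ∪
        keyEvenLenOddPos m '' (Set.univ ×ˢ PAIRS (2 * m + 2)) := by
  have heven : Set.range (fun j => (tm j, tmChanges j m)) = Set.univ ×ˢ PAIRS (2 * m) := by
    simpa using range_tm_add_tmChanges 0 m
  rw [Set.range_eq_range_two_mul_union_range_two_mul_add_one]
  simp only [twoAbelianKey_tmWord_two_mul_two_mul_add_two,
    twoAbelianKey_tmWord_two_mul_add_one_two_mul_add_two]
  rw [Set.range_comp', Set.range_comp', heven, range_tm_add_tmChanges]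
  rfl

lemma P_two_mul_add_one (n : ℕ) :
    P (2 * n + 1) = 2 * (2 * Nat.card (PAIRS (2 * n)) -
      Nat.card {x : ℕ | x ∈ PAIRS (2 * n) ∧ Even x}) := by
  rw [P_eq_ncard_range, range_twoAbelianKey_tmWord_two_mul_add_one,
    Set.ncard_image_prod_union_image_prod (E := {x | Even x}) (PAIRS_two_mul_finite n)
      (PAIRS_two_mul_finite n) (keyOddLenEvenPos_injective n) (keyOddLenOddPos_injective n)
      (keyOddLenEvenPos_eq_keyOddLenOddPos_iff n), Set.inter_self, Nat.card_eq_fintype_card,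
    Fintype.card_fin, two_mul (Nat.card _)]
  rfl

lemma P_two_mul_add_two (m : ℕ) :
    P (2 * m + 2) = 2 * (Nat.card (PAIRS (2 * m + 2)) + Nat.card (PAIRS (2 * m)) -
      Nat.card {x : ℕ | x ∈ PAIRS (2 * m + 2) ∩ PAIRS (2 * m) ∧ Even x}) := by
  rw [P_eq_ncard_range, range_twoAbelianKey_tmWord_two_mul_add_two, Set.union_comm,
    Set.ncard_image_prod_union_image_prod (E := {x | Even x})
      (by exact PAIRS_two_mul_finite (m + 1)) (PAIRS_two_mul_finite m)
      (keyEvenLenOddPos_injective m) (keyEvenLenEvenPos_injective m)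
      (keyEvenLenOddPos_eq_keyEvenLenEvenPos_iff m), Nat.card_eq_fintype_card, Fintype.card_fin]
  rfl

theorem thueMorse_P_via_PAIRS (n : ℕ) (hn : 4 ≤ n) :
    P (2 * n + 1) =
      2 * (2 * Nat.card (PAIRS (2 * n)) -
        Nat.card {x : ℕ | x ∈ PAIRS (2 * n) ∧ Even x}) ∧
    P (2 * n) =
      2 * (Nat.card (PAIRS (2 * n)) + Nat.card (PAIRS (2 * n - 2)) -
        Nat.card {x : ℕ | x ∈ PAIRS (2 * n) ∩ PAIRS (2 * n - 2) ∧ Even x}) := by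
  obtain ⟨m, rfl⟩ : ∃ m, n = m + 1 := ⟨n - 1, by omega⟩
  refine ⟨P_two_mul_add_one (m + 1), ?_⟩
  rw [show 2 * (m + 1) - 2 = 2 * m by omega]
  exact P_two_mul_add_two m
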